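/- arXiv:2602.24256 — 5 statements merged into one kernel-verified Lean document; each statement's English description precedes it below -/
import Mathlib

section
/- Let F, A, S, C be pairwise commuting symmetric positive definite matrices with S² + C² = I and let H be symmetric positive definite. With K = A(SHS + CFC)A and Y = (CH⁻¹C + SF⁻¹S)⁻¹, one has det(K)·det(Y) = det(H)·det(A²F), i.e., writing G = A²F, det(K)·det(Y) = det(H)·det(G). -/
/-!
Writing `T = C⁻¹S`, the matrices `SHS + CFC` and `CH⁻¹C + SF⁻¹S` are the conjugates by `C` of
`F + THT` and `H⁻¹ + TF⁻¹T`, and `(F + THT) F⁻¹ T = TH (H⁻¹ + TF⁻¹T)`. Taking determinants gives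
`det (SHS + CFC) = det H · det F · det (CH⁻¹C + SF⁻¹S)`; the factors `det A` cancel between `K`
and `G`, and positive definiteness makes every matrix that is inverted invertible.
-/

open Matrix

namespace Matrix

variable {n R : Type*} [Fintype n] [DecidableEq n] [CommRing R]

theorem det_add_mul_mul {T H F : Matrix n n R} (hT : IsUnit T.det) (hH : IsUnit H.det)
    (hF : IsUnit F.det) :
    det (F + T * H * T) = det H * det F * det (H⁻¹ + T * F⁻¹ * T) := by
  have key : (F + T * H * T) * F⁻¹ * T = T * H * (H⁻¹ + T * F⁻¹ * T) := by
    rw [add_mul, add_mul, mul_nonsing_inv F hF, one_mul, mul_add,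
      mul_nonsing_inv_cancel_right _ _ hH]
    simp only [mul_assoc]
  have hdet := congrArg det key
  rw [det_mul, det_mul, det_mul, det_mul, det_nonsing_inv] at hdet
  refine hT.mul_left_cancel ?_
  linear_combination F.det * hdet - (det (F + T * H * T) * T.det) * Ring.inverse_mul_cancel _ hF

theorem det_conj_add_conj {S C H F : Matrix n n R} (hSC : Commute S C) (hS : IsUnit S.det)
    (hC : IsUnit C.det) (hH : IsUnit H.det) (hF : IsUnit F.det) :
    det (S * H * S + C * F * C) = det H * det F * det (C * H⁻¹ * C + S * F⁻¹ * S) := by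
  set T := C⁻¹ * S
  have hCT : C * T = S := mul_nonsing_inv_cancel_left _ _ hC
  have hTC : T * C = S := by rw [mul_assoc, hSC.eq, nonsing_inv_mul_cancel_left _ _ hC]
  have hT : IsUnit T.det := by rw [det_mul, det_nonsing_inv]; exact hC.ringInverse.mul hS
  have conj (X Y : Matrix n n R) : C * X * C + S * Y * S = C * (X + T * Y * T) * C := by
    calc C * X * C + S * Y * S = C * X * C + C * T * Y * (T * C) := by rw [hCT, hTC]
      _ = _ := by simp only [mul_add, add_mul, mul_assoc]
  rw [add_comm, conj, conj, det_mul, det_mul, det_mul, det_mul, det_add_mul_mul hT hH hF]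
  ring

end Matrix

theorem ghmc_det_identity_general
    {d : ℕ} (F A S C H : Matrix (Fin d) (Fin d) ℝ)
    (hF : F.PosDef) (hS : S.PosDef) (hC : C.PosDef) (hH : H.PosDef)
    (hSC : S * C = C * S)
    (K Y G : Matrix (Fin d) (Fin d) ℝ)
    (hK : K = A * (S * H * S + C * F * C) * A)
    (hY : Y = (C * H⁻¹ * C + S * F⁻¹ * S)⁻¹)
    (hG : G = A * A * F) :
    K.det * Y.det = H.det * G.det := by
  have hM : (C * H⁻¹ * C + S * F⁻¹ * S).PosDef := by
    have hCHC := hH.inv.conjTranspose_mul_mul_same (mulVec_injective_of_isUnit hC.isUnit)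
    have hSFS := hF.inv.posSemidef.conjTranspose_mul_mul_same S
    rw [hC.isHermitian.eq] at hCHC
    rw [hS.isHermitian.eq] at hSFS
    exact hCHC.add_posSemidef hSFS
  have hdet {X : Matrix (Fin d) (Fin d) ℝ} (hX : X.PosDef) : IsUnit X.det := hX.det_pos.ne'.isUnit
  rw [hK, hY, hG, det_mul, det_mul, det_nonsing_inv, det_mul, det_mul,
    det_conj_add_conj hSC (hdet hS) (hdet hC) (hdet hH) (hdet hF),
    Ring.inverse_eq_inv]
  field_simp [(hdet hM).ne_zero]

theorem ghmc_det_identity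
    {d : ℕ} (F A S C H : Matrix (Fin d) (Fin d) ℝ)
    (hF : F.PosDef) (hA : A.PosDef) (hS : S.PosDef) (hC : C.PosDef) (hH : H.PosDef)
    (hFA : F * A = A * F) (hFS : F * S = S * F) (hFC : F * C = C * F)
    (hAS : A * S = S * A) (hAC : A * C = C * A) (hSC : S * C = C * S)
    (hSC1 : S * S + C * C = 1)
    (K Y G : Matrix (Fin d) (Fin d) ℝ)
    (hK : K = A * (S * H * S + C * F * C) * A)
    (hY : Y = (C * H⁻¹ * C + S * F⁻¹ * S)⁻¹)
    (hG : G = A * A * F) :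
    K.det * Y.det = H.det * G.det :=
  ghmc_det_identity_general F A S C H hF hS hC hH hSC K Y G hK hY hG
end

section
/- Let F, A, S, C be pairwise commuting symmetric positive definite matrices with S² + C² = I and H symmetric positive definite. Then the matrix Y defined as CHC + SFS - C(H-F)S(SHS+CFC)⁻¹S(H-F)C equals (CH⁻¹C + SF⁻¹S)⁻¹. -/
/-!
Write `R = [[C, S], [-S, C]]`, which is orthogonal because `S` and `C` commute and
`S² + C² = 1`, and `D = diag(H, F)`. Since `F` commutes with `S` and `C`, the block matrix
`R D Rᵀ` is `[[CHC + SFS, -C(H-F)S], [-S(H-F)C, SHS + CFC]]`, so `Y` is the Schur complement of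
its lower right block. The inverse of `R D Rᵀ` is `R D⁻¹ Rᵀ`, whose upper left block is
`CH⁻¹C + SF⁻¹S`; and the upper left block of the inverse of a block matrix is the inverse of the
Schur complement of its lower right block.
-/

open Matrix

theorem conj_mul_conj_eq_one {M : Type*} [Monoid M] {a b d e : M} (hab : a * b = 1)
    (hba : b * a = 1) (hde : d * e = 1) : a * d * b * (a * e * b) = 1 := by
  calc a * d * b * (a * e * b) = a * (d * (b * a) * e) * b := by simp only [mul_assoc]
    _ = 1 := by rw [hba, mul_one, hde, mul_one, hab]

namespace Matrix

variable {l m α : Type*} [Fintype l] [Fintype m] [CommRing α]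

theorem schur_complement_mul_eq_one [DecidableEq l] [DecidableEq m] {A P : Matrix l l α}
    {B Q : Matrix l m α} {C R : Matrix m l α} {D T : Matrix m m α} (hD : IsUnit D.det)
    (h : fromBlocks A B C D * fromBlocks P Q R T = 1) : (A - B * D⁻¹ * C) * P = 1 := by
  rw [fromBlocks_multiply, ← fromBlocks_one, fromBlocks_inj] at h
  obtain ⟨h₁₁, -, h₂₁, -⟩ := h
  have hR : D⁻¹ * (C * P) = -R := by
    rw [eq_neg_of_add_eq_zero_left h₂₁, Matrix.mul_neg, nonsing_inv_mul_cancel_left _ _ hD]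
  rw [sub_mul, Matrix.mul_assoc, Matrix.mul_assoc, hR, Matrix.mul_neg, sub_neg_eq_add, h₁₁]

theorem fromBlocks_rotation_mul_transpose [DecidableEq m] {S C : Matrix m m α}
    (hSC : S * C = C * S) (hSC1 : S * S + C * C = 1) : fromBlocks C S (-S) C * fromBlocks C (-S) S C = 1 := by
  rw [fromBlocks_multiply, ← fromBlocks_one]
  congr 1
  · rw [add_comm, hSC1]
  · rw [Matrix.mul_neg, hSC, neg_add_cancel]
  · rw [Matrix.neg_mul, hSC, neg_add_cancel]
  · rw [neg_mul_neg, hSC1]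

theorem fromBlocks_rotation_conj_diagonal (S C H F : Matrix m m α) :
    fromBlocks C S (-S) C * fromBlocks H 0 0 F * fromBlocks C (-S) S C
      = fromBlocks (C * H * C + S * F * S) (S * F * C - C * H * S)
          (C * F * S - S * H * C) (S * H * S + C * F * C) := by
  simp only [fromBlocks_multiply, Matrix.mul_zero, add_zero, zero_add,
    Matrix.mul_neg, Matrix.neg_mul, neg_neg]
  congr 1 <;> abel

theorem PosDef.mul_mul_of_isHermitian [DecidableEq m] [PartialOrder α] [StarRing α]
    {P X : Matrix m m α}
    (hP : P.PosDef) (hX : X.IsHermitian) (hXu : IsUnit X) : (X * P * X).PosDef := by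
  have h := hP.conjTranspose_mul_mul_same (mulVec_injective_of_isUnit hXu)
  rwa [hX.eq] at h

end Matrix

theorem ghmc_Y_identity_general
    {d : ℕ} (F S C H : Matrix (Fin d) (Fin d) ℝ)
    (hF : F.PosDef) (hS : S.PosDef) (hC : C.PosDef) (hH : H.PosDef)
    (hFS : F * S = S * F) (hFC : F * C = C * F)
    (hSC : S * C = C * S)
    (hSC1 : S * S + C * C = 1) :
    C * H * C + S * F * S
      - C * (H - F) * S * (S * H * S + C * F * C)⁻¹ * (S * (H - F) * C)
    = (C * H⁻¹ * C + S * F⁻¹ * S)⁻¹ := by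
  have hM : IsUnit (S * H * S + C * F * C).det :=
    ((hH.mul_mul_of_isHermitian hS.isHermitian hS.isUnit).add
      (hF.mul_mul_of_isHermitian hC.isHermitian hC.isUnit)).det_pos.ne'.isUnit
  have hR := fromBlocks_rotation_mul_transpose hSC hSC1
  have hD : fromBlocks H 0 0 F * fromBlocks H⁻¹ 0 0 F⁻¹ = 1 := by
    simp [fromBlocks_multiply, mul_nonsing_inv _ hH.det_pos.ne'.isUnit,
      mul_nonsing_inv _ hF.det_pos.ne'.isUnit]
  have hconj := conj_mul_conj_eq_one hR (mul_eq_one_comm.mp hR) hD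
  rw [fromBlocks_rotation_conj_diagonal, fromBlocks_rotation_conj_diagonal] at hconj
  have hSFC : S * F * C = C * F * S := by
    rw [mul_assoc, hFC, ← mul_assoc, hSC, mul_assoc, ← hFS, ← mul_assoc]
  have hY := schur_complement_mul_eq_one hM hconj
  rw [show S * F * C - C * H * S = -(C * (H - F) * S) by rw [hSFC]; noncomm_ring,
    show C * F * S - S * H * C = -(S * (H - F) * C) by rw [← hSFC]; noncomm_ring,
    Matrix.neg_mul, neg_mul_neg] at hY
  exact (inv_eq_left_inv hY).symm

theorem ghmc_Y_identity
    {d : ℕ} (F A S C H : Matrix (Fin d) (Fin d) ℝ)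
    (hF : F.PosDef) (hA : A.PosDef) (hS : S.PosDef) (hC : C.PosDef) (hH : H.PosDef)
    (hFA : F * A = A * F) (hFS : F * S = S * F) (hFC : F * C = C * F)
    (hAS : A * S = S * A) (hAC : A * C = C * A) (hSC : S * C = C * S)
    (hSC1 : S * S + C * C = 1) :
    C * H * C + S * F * S
      - C * (H - F) * S * (S * H * S + C * F * C)⁻¹ * (S * (H - F) * C)
    = (C * H⁻¹ * C + S * F⁻¹ * S)⁻¹ :=
  ghmc_Y_identity_general F S C H hF hS hC hH hFS hFC hSC hSC1
end

section
/- Let F, S, C, H be symmetric positive definite d×d matrices with F, S, C pairwise commuting and S² + C² = I. Then H - HS(SHS + CFC)⁻¹SH - (H⁻¹ + C⁻¹SF⁻¹SC⁻¹)⁻¹ = 0. -/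
/-!
With `G = C F C`, the commutation of `S` and `C` turns `C⁻¹ S F⁻¹ S C⁻¹` into `S G⁻¹ S`, and the
claim becomes the Woodbury identity `(H⁻¹ + S G⁻¹ S)⁻¹ = H - H S (G + S H S)⁻¹ S H`. Positive
definiteness makes `H`, `G` and `G + S H S` invertible.
-/

open Matrix

namespace Matrix

variable {m n α : Type*} [Fintype m] [Fintype n] [DecidableEq m] [DecidableEq n] [CommRing α]

-- A singular `A` has `A⁻¹ = 0`, which commutes with everything.
lemma commute_nonsing_inv_left {A B : Matrix n n α} (h : Commute A B) : Commute A⁻¹ B := by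
  by_cases hA : IsUnit A
  · obtain ⟨_⟩ := hA.nonempty_invertible
    simpa only [invOf_eq_nonsing_inv] using h.invOf_left
  · simp [nonsing_inv_eq_ringInverse, Ring.inverse_non_unit _ hA]

lemma inv_add_mul_inv_mul_inv_eq_sub {H : Matrix n n α} {G : Matrix m m α}
    (U : Matrix n m α) (V : Matrix m n α) (hH : IsUnit H) (hG : IsUnit G)
    (hGH : IsUnit (G + V * H * U)) :
    (H⁻¹ + U * G⁻¹ * V)⁻¹ = H - H * U * (G + V * H * U)⁻¹ * (V * H) := by
  have hH' : H⁻¹⁻¹ = H := nonsing_inv_nonsing_inv H ((isUnit_iff_isUnit_det H).mp hH)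
  have hG' : G⁻¹⁻¹ = G := nonsing_inv_nonsing_inv G ((isUnit_iff_isUnit_det G).mp hG)
  rw [add_mul_mul_inv_eq_sub _ _ _ _ (isUnit_nonsing_inv_iff.mpr hH)
    (isUnit_nonsing_inv_iff.mpr hG) (by rwa [hH', hG']), hH', hG', ← Matrix.mul_assoc _ V H]

end Matrix

theorem ghmc_zeta_vanishes_general
    {d : ℕ} (F S C H : Matrix (Fin d) (Fin d) ℝ)
    (hF : F.PosDef) (hS : S.PosDef) (hC : C.PosDef) (hH : H.PosDef)
    (hSC : S * C = C * S) :
    H - H * S * (S * H * S + C * F * C)⁻¹ * (S * H)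
      - (H⁻¹ + C⁻¹ * S * F⁻¹ * S * C⁻¹)⁻¹ = 0 := by
  have hK : C⁻¹ * S * F⁻¹ * S * C⁻¹ = S * (C * F * C)⁻¹ * S := by
    have hCS : C⁻¹ * S = S * C⁻¹ := commute_nonsing_inv_left hSC.symm
    rw [Matrix.mul_inv_rev, Matrix.mul_inv_rev, hCS]
    simp only [mul_assoc, hCS]
  have hA : (C * F * C + S * H * S).PosDef := by
    have hSHS := hH.conjTranspose_mul_mul_same (mulVec_injective_of_isUnit hS.isUnit)
    have hCFC := hF.posSemidef.conjTranspose_mul_mul_same C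
    rw [hS.isHermitian.eq] at hSHS
    rw [hC.isHermitian.eq] at hCFC
    exact hSHS.posSemidef_add hCFC
  rw [hK, inv_add_mul_inv_mul_inv_eq_sub S S hH.isUnit
    (hC.isUnit.mul hF.isUnit |>.mul hC.isUnit) hA.isUnit, add_comm, sub_self]

theorem ghmc_zeta_vanishes
    {d : ℕ} (F S C H : Matrix (Fin d) (Fin d) ℝ)
    (hF : F.PosDef) (hS : S.PosDef) (hC : C.PosDef) (hH : H.PosDef)
    (hFS : F * S = S * F) (hFC : F * C = C * F) (hSC : S * C = C * S)
    (hSC1 : S * S + C * C = 1) :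
    H - H * S * (S * H * S + C * F * C)⁻¹ * (S * H)
      - (H⁻¹ + C⁻¹ * S * F⁻¹ * S * C⁻¹)⁻¹ = 0 :=
  ghmc_zeta_vanishes_general F S C H hF hS hC hH hSC
end

section
/- Let Φ ⊂ ℝ^d × (d×d SPD matrices) be a set of parameters, and define the matrix convex hull ℱ_Σ = { Σ_{j=1}^J V_jᵀ Σ_j V_j : J ∈ ℕ, Σ_j V_jᵀ V_j = I, (μ_j, Σ_j) ∈ Φ }. Suppose Σ' = C Σ C + S Σ_f S where C, S are symmetric positive definite with C² + S² = I, all V_j's arising commute appropriately with C, and (μ_f, Σ_f) ∈ Φ. Then dist(Σ', ℱ_Σ) ≤ ‖C‖² · dist(Σ, ℱ_Σ), where dist is the infimum over the operator-norm distances to elements of ℱ_Σ. -/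
open Matrix
open scoped Matrix.Norms.L2Operator

/-- The matrix convex hull of the covariance matrices of the targets in `Φ`. -/
def covHull {d : ℕ} (Φ : Set ((Fin d → ℝ) × Matrix (Fin d) (Fin d) ℝ)) :
    Set (Matrix (Fin d) (Fin d) ℝ) :=
  { B | ∃ (J : ℕ) (V Sigs : Fin J → Matrix (Fin d) (Fin d) ℝ) (μs : Fin J → (Fin d → ℝ)),
      (∀ j, (μs j, Sigs j) ∈ Φ) ∧ (∑ j, (V j)ᵀ * V j = 1) ∧
      B = ∑ j, (V j)ᵀ * Sigs j * V j }

/-!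
The affine map `X ↦ C X C + S Σf S` sends the matrix convex hull into itself: a representation
`∑ Vⱼᵀ Σⱼ Vⱼ` with `∑ Vⱼᵀ Vⱼ = 1` becomes `∑ (Vⱼ C)ᵀ Σⱼ (Vⱼ C) + Sᵀ Σf S`, and
`∑ (Vⱼ C)ᵀ (Vⱼ C) + Sᵀ S = C² + S² = 1`. In operator norm this map is `‖C‖²`-Lipschitz, and a
`K`-Lipschitz self-map of a set multiplies the distance to that set by at most `K`.
-/

theorem Metric.infDist_le_mul_infDist_of_mapsTo {α β : Type*} [PseudoMetricSpace α]
    [PseudoMetricSpace β] {f : α → β} {K : NNReal} {s : Set α} {t : Set β}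
    (hf : LipschitzWith K f) (hst : Set.MapsTo f s t) (hs : s.Nonempty) (x : α) :
    Metric.infDist (f x) t ≤ K * Metric.infDist x s := by
  have : Nonempty s := hs.to_subtype
  rw [Metric.infDist_eq_iInf (x := x), Real.mul_iInf_of_nonneg K.coe_nonneg]
  exact le_ciInf fun y =>
    (Metric.infDist_le_dist_of_mem (hst y.2)).trans (hf.dist_le_mul x y)

theorem Matrix.lipschitzWith_mul_mul_add {𝕜 : Type*} [RCLike 𝕜] {l m n p : Type*}
    [Fintype l] [Fintype m] [Fintype n] [Fintype p]
    [DecidableEq l] [DecidableEq m] [DecidableEq n] [DecidableEq p]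
    (A : Matrix l m 𝕜) (B : Matrix n p 𝕜) (D : Matrix l p 𝕜) :
    LipschitzWith (‖A‖₊ * ‖B‖₊) fun X : Matrix m n 𝕜 => A * X * B + D := by
  refine LipschitzWith.of_dist_le_mul fun X Y => ?_
  rw [dist_eq_norm, dist_eq_norm, add_sub_add_right_eq_sub, ← Matrix.sub_mul, ← Matrix.mul_sub]
  calc ‖A * (X - Y) * B‖ ≤ ‖A * (X - Y)‖ * ‖B‖ := l2_opNorm_mul _ _
    _ ≤ ‖A‖ * ‖X - Y‖ * ‖B‖ := by gcongr; exact l2_opNorm_mul _ _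
    _ = ↑(‖A‖₊ * ‖B‖₊) * ‖X - Y‖ := by push_cast; ring

section covHull

variable {d : ℕ} {Φ : Set ((Fin d → ℝ) × Matrix (Fin d) (Fin d) ℝ)}

theorem mem_covHull_of_mem {μ : Fin d → ℝ} {Sig : Matrix (Fin d) (Fin d) ℝ} (h : (μ, Sig) ∈ Φ) :
    Sig ∈ covHull Φ :=
  ⟨1, fun _ => 1, fun _ => Sig, fun _ => μ, fun _ => h, by simp, by simp⟩

theorem conj_add_mem_covHull {C S Sf A : Matrix (Fin d) (Fin d) ℝ} {μf : Fin d → ℝ}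
    (hCS : Cᵀ * C + Sᵀ * S = 1) (hf : (μf, Sf) ∈ Φ) (hA : A ∈ covHull Φ) :
    Cᵀ * A * C + Sᵀ * Sf * S ∈ covHull Φ := by
  obtain ⟨J, V, Sigs, μs, hmem, hsum, rfl⟩ := hA
  have conj_sum (M : Fin J → Matrix (Fin d) (Fin d) ℝ) :
      ∑ j, (V j * C)ᵀ * M j * (V j * C) = Cᵀ * (∑ j, (V j)ᵀ * M j * V j) * C := by
    simp only [Finset.mul_sum, Finset.sum_mul, transpose_mul, Matrix.mul_assoc]
  refine ⟨J + 1, Fin.snoc (fun j => V j * C) S, Fin.snoc Sigs Sf, Fin.snoc μs μf,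
    Fin.lastCases (by simpa using hf) (fun j => by simpa using hmem j), ?_, ?_⟩
  · simp only [Fin.sum_univ_castSucc, Fin.snoc_castSucc, Fin.snoc_last]
    have hV := conj_sum fun _ => 1
    simp only [Matrix.mul_one] at hV
    rw [hV, hsum, Matrix.mul_one, hCS]
  · simp only [Fin.sum_univ_castSucc, Fin.snoc_castSucc, Fin.snoc_last, conj_sum]

end covHull

theorem ghmc_cov_dist_contraction
    {d : ℕ} (Φ : Set ((Fin d → ℝ) × Matrix (Fin d) (Fin d) ℝ))
    (C S Sf Sig Sig' : Matrix (Fin d) (Fin d) ℝ)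
    (hC : C.PosDef) (hS : S.PosDef)
    (hCS : C * C + S * S = 1)
    (μf : Fin d → ℝ) (hf : (μf, Sf) ∈ Φ)
    (hSig' : Sig' = C * Sig * C + S * Sf * S) :
    Metric.infDist Sig' (covHull Φ) ≤ ‖C‖ ^ 2 * Metric.infDist Sig (covHull Φ) := by
  have hCt : Cᵀ = C := (isHermitian_iff_isSymm.mp hC.isHermitian).eq
  have hSt : Sᵀ = S := (isHermitian_iff_isSymm.mp hS.isHermitian).eq
  have hmaps : Set.MapsTo (fun X => C * X * C + S * Sf * S) (covHull Φ) (covHull Φ) :=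
    fun A hA => by
      simpa only [hCt, hSt] using conj_add_mem_covHull (C := C) (S := S) (by rwa [hCt, hSt]) hf hA
  calc Metric.infDist Sig' (covHull Φ)
      ≤ ↑(‖C‖₊ * ‖C‖₊) * Metric.infDist Sig (covHull Φ) := hSig' ▸
        Metric.infDist_le_mul_infDist_of_mapsTo (lipschitzWith_mul_mul_add C C _) hmaps
          ⟨Sf, mem_covHull_of_mem hf⟩ Sig
    _ = ‖C‖ ^ 2 * Metric.infDist Sig (covHull Φ) := by push_cast; ring
end

section
/- Let M_j be i.i.d. bounded real random variables with mean E[M] and S_j² i.i.d. bounded nonnegative random variables with mean E[S²], independent for different j, and α ∈ (0,1). Let X_∞ be a random variable whose conditional distribution given (μ_∞, σ²_∞) = (Σ_j (1-α)α^j M_j, Σ_j (1-α²)α^{2j} S_j²) is N(μ_∞, σ²_∞). Then E[X_∞] = E[M] and Var(X_∞) = E[S²] + ((1-α)/(1+α))·Var(M). -/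
/-!
Conditionally on `(μ∞, σ²∞)` the variable `X∞` is `N(μ∞, σ²∞)`, so `E[X∞] = E[μ∞]` and, by the
law of total variance, `Var X∞ = E[σ²∞] + Var μ∞`. The weights are summable and the `M_j`, `S_j²`
uniformly bounded, so expectations pass through the series; by independence only the diagonal
terms of `E[μ∞²]` survive, giving `Var μ∞ = Var M · ∑ (1 - α)² α^{2j} = (1 - α)/(1 + α) · Var M`.
-/

open MeasureTheory ProbabilityTheory
open scoped ENNReal NNReal

section WeightedSeries

variable {Ω ι : Type*} [MeasurableSpace Ω] {P : Measure Ω} [Countable ι]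
  {c : ι → ℝ} {Z : ι → Ω → ℝ} {C : ℝ}

lemma ae_norm_tsum_mul_le (hc : Summable c) (hZ_bdd : ∀ i, ∀ᵐ ω ∂P, ‖Z i ω‖ ≤ C) :
    ∀ᵐ ω ∂P, ‖∑' i, c i * Z i ω‖ ≤ (∑' i, ‖c i‖) * C := by
  filter_upwards [ae_all_iff.2 hZ_bdd] with ω hω
  refine tsum_of_norm_bounded (hc.norm.hasSum.mul_right C) fun i => ?_
  rw [norm_mul]
  exact mul_le_mul_of_nonneg_left (hω i) (norm_nonneg _)

lemma memLp_tsum_mul [IsFiniteMeasure P] (hc : Summable c)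
    (hZ_meas : ∀ i, AEMeasurable (Z i) P) (hZ_bdd : ∀ i, ∀ᵐ ω ∂P, ‖Z i ω‖ ≤ C) (p : ℝ≥0∞) :
    MemLp (fun ω => ∑' i, c i * Z i ω) p P :=
  .of_bound (AEMeasurable.tsum fun i => (hZ_meas i).const_mul (c i)).aestronglyMeasurable _
    (ae_norm_tsum_mul_le hc hZ_bdd)

lemma hasSum_integral_tsum_mul [IsFiniteMeasure P] (hc : Summable c)
    (hZ_meas : ∀ i, AEMeasurable (Z i) P) (hZ_bdd : ∀ i, ∀ᵐ ω ∂P, ‖Z i ω‖ ≤ C) :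
    HasSum (fun i => c i * ∫ ω, Z i ω ∂P) (∫ ω, ∑' i, c i * Z i ω ∂P) := by
  have hint (i : ι) : Integrable (fun ω => c i * Z i ω) P :=
    (Integrable.of_bound (hZ_meas i).aestronglyMeasurable C (hZ_bdd i)).const_mul (c i)
  have hbound (i : ι) : ∫ ω, ‖c i * Z i ω‖ ∂P ≤ ‖c i‖ * (P.real Set.univ * C) := by
    calc ∫ ω, ‖c i * Z i ω‖ ∂P ≤ ∫ _, ‖c i‖ * C ∂P :=
          integral_mono_of_nonneg (ae_of_all _ fun _ => norm_nonneg _) (integrable_const _) <| by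
            filter_upwards [hZ_bdd i] with ω hω
            rw [norm_mul]
            exact mul_le_mul_of_nonneg_left hω (norm_nonneg _)
      _ = ‖c i‖ * (P.real Set.univ * C) := by rw [integral_const, smul_eq_mul]; ring
  have hsum : Summable fun i => ∫ ω, ‖c i * Z i ω‖ ∂P :=
    (hc.norm.mul_right _).of_nonneg_of_le (fun _ => integral_nonneg fun _ => norm_nonneg _) hbound
  simpa only [integral_const_mul] using hasSum_integral_of_summable_integral_norm hint hsum

lemma integral_mul_tsum_mul [IsProbabilityMeasure P] (hc : Summable c)
    (hZ_meas : ∀ i, AEMeasurable (Z i) P) (hZ_bdd : ∀ i, ∀ᵐ ω ∂P, ‖Z i ω‖ ≤ C)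
    (hindep : Pairwise fun i j => IndepFun (Z i) (Z j) P) (i : ι) :
    ∫ ω, Z i ω * ∑' k, c k * Z k ω ∂P
      = (∫ ω, Z i ω ∂P) * (∫ ω, ∑' k, c k * Z k ω ∂P) + c i * variance (Z i) P := by
  classical
  have hZ2 (k : ι) : MemLp (Z k) 2 P := .of_bound (hZ_meas k).aestronglyMeasurable C (hZ_bdd k)
  have hprod (k : ι) : ∫ ω, Z i ω * Z k ω ∂P
      = (∫ ω, Z i ω ∂P) * (∫ ω, Z k ω ∂P) + if k = i then variance (Z i) P else 0 := by
    rcases eq_or_ne k i with rfl | hki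
    · rw [if_pos rfl, variance_eq_sub (hZ2 k)]
      simp only [Pi.pow_apply, sq]
      ring
    · rw [if_neg hki, add_zero]
      exact (hindep hki.symm).integral_mul_eq_mul_integral (hZ_meas i).aestronglyMeasurable
        (hZ_meas k).aestronglyMeasurable
  have hZZ (k : ι) : ∀ᵐ ω ∂P, ‖Z i ω * Z k ω‖ ≤ C * C := by
    filter_upwards [hZ_bdd i, hZ_bdd k] with ω hi hk
    rw [norm_mul]
    exact mul_le_mul hi hk (norm_nonneg _) ((norm_nonneg _).trans hi)
  have hsum := hasSum_integral_tsum_mul (Z := fun k ω => Z i ω * Z k ω) hc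
    (fun k => (hZ_meas i).mul (hZ_meas k)) hZZ
  have hdiag : HasSum (fun k => c k * if k = i then variance (Z i) P else 0)
      (c i * variance (Z i) P) := by
    convert hasSum_ite_eq i (c i * variance (Z i) P) using 2 with k
    split_ifs with h <;> simp [h]
  have hsum' : HasSum (fun k => c k * ∫ ω, Z i ω * Z k ω ∂P)
      ((∫ ω, Z i ω ∂P) * (∫ ω, ∑' k, c k * Z k ω ∂P) + c i * variance (Z i) P) := by
    refine (((hasSum_integral_tsum_mul hc hZ_meas hZ_bdd).mul_left _).add hdiag).congr_fun
      fun k => ?_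
    rw [hprod]
    ring
  have hexpand : (fun ω => Z i ω * ∑' k, c k * Z k ω)
      = fun ω => ∑' k, c k * (Z i ω * Z k ω) := by
    ext ω
    rw [← tsum_mul_left]
    exact tsum_congr fun k => by ring
  rw [hexpand]
  exact hsum.unique hsum'

lemma variance_tsum_mul [IsProbabilityMeasure P] (hc : Summable c)
    (hZ_meas : ∀ i, AEMeasurable (Z i) P) (hZ_bdd : ∀ i, ∀ᵐ ω ∂P, ‖Z i ω‖ ≤ C)
    (hindep : Pairwise fun i j => IndepFun (Z i) (Z j) P) :
    variance (fun ω => ∑' i, c i * Z i ω) P = ∑' i, c i ^ 2 * variance (Z i) P := by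
  have hZS (i : ι) : ∀ᵐ ω ∂P, ‖Z i ω * ∑' k, c k * Z k ω‖ ≤ C * ((∑' k, ‖c k‖) * C) := by
    filter_upwards [hZ_bdd i, ae_norm_tsum_mul_le hc hZ_bdd] with ω hi hsum
    rw [norm_mul]
    exact mul_le_mul hi hsum (norm_nonneg _) ((norm_nonneg _).trans hi)
  have hexpand : (fun ω => (∑' i, c i * Z i ω) ^ 2)
      = fun ω => ∑' i, c i * (Z i ω * ∑' k, c k * Z k ω) := by
    ext ω
    rw [sq, ← tsum_mul_right]
    exact tsum_congr fun i => by ring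
  have hS2 := hasSum_integral_tsum_mul (Z := fun i ω => Z i ω * ∑' k, c k * Z k ω) hc
    (fun i => (hZ_meas i).mul (AEMeasurable.tsum fun k => (hZ_meas k).const_mul (c k))) hZS
  rw [← hexpand] at hS2
  have hV := hS2.sub ((hasSum_integral_tsum_mul hc hZ_meas hZ_bdd).mul_right
    (∫ ω, ∑' i, c i * Z i ω ∂P))
  rw [← sq] at hV
  rw [variance_eq_sub (memLp_tsum_mul hc hZ_meas hZ_bdd 2)]
  refine (hV.congr_fun fun i => ?_).tsum_eq.symm
  rw [integral_mul_tsum_mul hc hZ_meas hZ_bdd hindep i]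
  ring

lemma integral_tsum_mul_of_integral_eq [IsFiniteMeasure P] {s a : ℝ} (hc : HasSum c s)
    (hZ_meas : ∀ i, AEMeasurable (Z i) P) (hZ_bdd : ∀ i, ∀ᵐ ω ∂P, ‖Z i ω‖ ≤ C)
    (hmean : ∀ i, ∫ ω, Z i ω ∂P = a) :
    ∫ ω, ∑' i, c i * Z i ω ∂P = s * a := by
  rw [← (hasSum_integral_tsum_mul hc.summable hZ_meas hZ_bdd).tsum_eq]
  simp_rw [hmean]
  rw [tsum_mul_right, hc.tsum_eq]

lemma variance_tsum_mul_of_variance_eq [IsProbabilityMeasure P] {s V : ℝ} (hc : Summable c)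
    (hc2 : HasSum (fun i => c i ^ 2) s) (hZ_meas : ∀ i, AEMeasurable (Z i) P)
    (hZ_bdd : ∀ i, ∀ᵐ ω ∂P, ‖Z i ω‖ ≤ C) (hindep : Pairwise fun i j => IndepFun (Z i) (Z j) P)
    (hvar : ∀ i, variance (Z i) P = V) :
    variance (fun ω => ∑' i, c i * Z i ω) P = s * V := by
  rw [variance_tsum_mul hc hZ_meas hZ_bdd hindep]
  simp_rw [hvar]
  rw [tsum_mul_right, hc2.tsum_eq]

end WeightedSeries

lemma integral_sq_gaussianReal (μ : ℝ) (v : ℝ≥0) : ∫ x, x ^ 2 ∂gaussianReal μ v = v + μ ^ 2 := by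
  have h := variance_eq_sub (memLp_id_gaussianReal (μ := μ) (v := v) 2)
  simp only [variance_id_gaussianReal, Pi.pow_apply, id_eq, integral_id_gaussianReal] at h
  linarith

section CondDistrib

variable {Ω β γ E : Type*} [MeasurableSpace Ω] [MeasurableSpace β] [MeasurableSpace γ]
  [StandardBorelSpace γ] [Nonempty γ] [NormedAddCommGroup E]
  {P : Measure Ω} [IsFiniteMeasure P] {X : Ω → γ} {Y : Ω → β} {f : γ → E}

lemma integral_comp_eq_integral_condDistrib [NormedSpace ℝ E] (hY : AEMeasurable Y P)
    (hX : AEMeasurable X P) (hf : StronglyMeasurable f) (hint : Integrable (fun ω => f (X ω)) P) :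
    ∫ ω, f (X ω) ∂P = ∫ y, ∫ x, f x ∂condDistrib X Y P y ∂P.map Y := by
  have hf' : AEStronglyMeasurable (fun p : β × γ => f p.2) (P.map fun ω => (Y ω, X ω)) :=
    (hf.comp_measurable measurable_snd).aestronglyMeasurable
  rw [← integral_map (hY.prodMk hX) hf', ← compProd_map_condDistrib hX,
    Measure.integral_compProd]
  rwa [compProd_map_condDistrib hX, integrable_map_measure hf' (hY.prodMk hX)]

lemma integrable_comp_of_integrable_integral_condDistrib (hY : AEMeasurable Y P)
    (hX : AEMeasurable X P) (hf : StronglyMeasurable f)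
    (h_ae : ∀ᵐ y ∂P.map Y, Integrable f (condDistrib X Y P y))
    (h_int : Integrable (fun y => ∫ x, ‖f x‖ ∂condDistrib X Y P y) (P.map Y)) :
    Integrable (fun ω => f (X ω)) P := by
  have hf' : AEStronglyMeasurable (fun p : β × γ => f p.2) (P.map fun ω => (Y ω, X ω)) :=
    (hf.comp_measurable measurable_snd).aestronglyMeasurable
  exact (integrable_map_measure hf' (hY.prodMk hX)).1
    ((hf'.ae_integrable_condDistrib_map_iff hX).1 ⟨h_ae, h_int⟩)

end CondDistrib

section GaussianMixture

variable {Ω : Type*} [MeasurableSpace Ω] {P : Measure Ω} [IsProbabilityMeasure P]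
  {X m v : Ω → ℝ}

lemma memLp_two_of_condDistrib_eq_gaussianReal (hX : AEMeasurable X P) (hm : MemLp m 2 P)
    (hv : Integrable v P)
    (hcond : ∀ᵐ p ∂(P.map fun ω => (m ω, v ω)),
      condDistrib X (fun ω => (m ω, v ω)) P p = gaussianReal p.1 p.2.toNNReal) :
    MemLp X 2 P := by
  have hmv : AEMeasurable (fun ω => (m ω, v ω)) P :=
    hm.aestronglyMeasurable.aemeasurable.prodMk hv.aemeasurable
  rw [memLp_two_iff_integrable_sq hX.aestronglyMeasurable]
  refine integrable_comp_of_integrable_integral_condDistrib (f := fun x : ℝ => x ^ 2) hmv hX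
    (by fun_prop) ?_ ?_
  · filter_upwards [hcond] with p hp
    rw [hp]
    exact (memLp_id_gaussianReal 2).integrable_sq
  · have hsecond : Integrable (fun p : ℝ × ℝ => (p.2.toNNReal : ℝ) + p.1 ^ 2)
        (P.map fun ω => (m ω, v ω)) := by
      rw [integrable_map_measure (by fun_prop) hmv]
      exact hv.real_toNNReal.add hm.integrable_sq
    refine hsecond.congr ?_
    filter_upwards [hcond] with p hp
    simp only [hp, Real.norm_eq_abs, abs_pow, sq_abs, integral_sq_gaussianReal]

lemma integral_eq_of_condDistrib_eq_gaussianReal (hX : AEMeasurable X P)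
    (hm : AEMeasurable m P) (hv : AEMeasurable v P) (hXint : Integrable X P)
    (hcond : ∀ᵐ p ∂(P.map fun ω => (m ω, v ω)),
      condDistrib X (fun ω => (m ω, v ω)) P p = gaussianReal p.1 p.2.toNNReal) :
    ∫ ω, X ω ∂P = ∫ ω, m ω ∂P := by
  rw [integral_comp_eq_integral_condDistrib (f := fun x => x) (hm.prodMk hv) hX
      stronglyMeasurable_id hXint,
    integral_congr_ae (g := Prod.fst) (hcond.mono fun p hp => by simp [hp]),
    integral_map (hm.prodMk hv) measurable_fst.aestronglyMeasurable]

lemma variance_eq_of_condDistrib_eq_gaussianReal (hX : AEMeasurable X P) (hm : MemLp m 2 P)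
    (hv : Integrable v P) (hv0 : ∀ᵐ ω ∂P, 0 ≤ v ω)
    (hcond : ∀ᵐ p ∂(P.map fun ω => (m ω, v ω)),
      condDistrib X (fun ω => (m ω, v ω)) P p = gaussianReal p.1 p.2.toNNReal) :
    variance X P = ∫ ω, v ω ∂P + variance m P := by
  have hmv : AEMeasurable (fun ω => (m ω, v ω)) P :=
    hm.aestronglyMeasurable.aemeasurable.prodMk hv.aemeasurable
  have hX2 := memLp_two_of_condDistrib_eq_gaussianReal hX hm hv hcond
  have hmean := integral_eq_of_condDistrib_eq_gaussianReal hX hm.aestronglyMeasurable.aemeasurable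
    hv.aemeasurable (hX2.integrable one_le_two) hcond
  have hv0' : ∀ᵐ p ∂(P.map fun ω => (m ω, v ω)), 0 ≤ p.2 :=
    (ae_map_iff hmv (measurableSet_le measurable_const measurable_snd)).2 hv0
  have hsecond : ∫ ω, X ω ^ 2 ∂P = ∫ ω, v ω + m ω ^ 2 ∂P := by
    rw [integral_comp_eq_integral_condDistrib (f := fun x : ℝ => x ^ 2) hmv hX (by fun_prop)
      hX2.integrable_sq]
    rw [integral_congr_ae (g := fun p : ℝ × ℝ => p.2 + p.1 ^ 2)]
    · exact integral_map hmv (by fun_prop)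
    filter_upwards [hcond, hv0'] with p hp hp0
    simp [hp, integral_sq_gaussianReal, hp0]
  rw [variance_eq_sub hX2, variance_eq_sub hm]
  simp only [Pi.pow_apply]
  rw [hsecond, hmean, integral_add hv hm.integrable_sq]
  ring

end GaussianMixture

lemma hasSum_one_sub_mul_pow {r : ℝ} (h0 : 0 ≤ r) (h1 : r < 1) :
    HasSum (fun j : ℕ => (1 - r) * r ^ j) 1 := by
  simpa [mul_inv_cancel₀ (sub_pos.2 h1).ne'] using
    (hasSum_geometric_of_lt_one h0 h1).mul_left (1 - r)

lemma hasSum_sq_one_sub_mul_pow {r : ℝ} (h0 : 0 ≤ r) (h1 : r < 1) :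
    HasSum (fun j : ℕ => ((1 - r) * r ^ j) ^ 2) ((1 - r) / (1 + r)) := by
  have h := (hasSum_geometric_of_lt_one (sq_nonneg r) (by nlinarith)).mul_left ((1 - r) ^ 2)
  have hr : (1 - r) ^ 2 * (1 - r ^ 2)⁻¹ = (1 - r) / (1 + r) := by
    have : 1 - r ≠ 0 := (sub_pos.2 h1).ne'
    have : 1 + r ≠ 0 := by positivity
    rw [show 1 - r ^ 2 = (1 - r) * (1 + r) by ring]
    field_simp
  rw [hr] at h
  exact h.congr_fun fun j => by ring

theorem ghmc_limit_moments
    {Ω : Type*} [MeasurableSpace Ω] (P : Measure Ω) [IsProbabilityMeasure P]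
    (α : ℝ) (hα0 : 0 < α) (hα1 : α < 1)
    (M S2 : ℕ → Ω → ℝ)
    (hmeas : ∀ n, Measurable fun ω => (M n ω, S2 n ω))
    (hindep : iIndepFun (fun n ω => (M n ω, S2 n ω)) P)
    (hident : ∀ n, P.map (fun ω => (M n ω, S2 n ω)) = P.map (fun ω => (M 0 ω, S2 0 ω)))
    (Cb : ℝ) (hbd : ∀ n, ∀ᵐ ω ∂P, |M n ω| ≤ Cb ∧ |S2 n ω| ≤ Cb)
    (hS2nonneg : ∀ n, ∀ᵐ ω ∂P, 0 ≤ S2 n ω)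
    (μinf σinf : Ω → ℝ)
    (hμinf : μinf = fun ω => ∑' j : ℕ, (1 - α) * α ^ j * M j ω)
    (hσinf : σinf = fun ω => ∑' j : ℕ, (1 - α ^ 2) * α ^ (2 * j) * S2 j ω)
    (X : Ω → ℝ) (hXmeas : Measurable X)
    (hcond : ∀ᵐ p ∂(P.map fun ω => (μinf ω, σinf ω)),
      condDistrib X (fun ω => (μinf ω, σinf ω)) P p = gaussianReal p.1 p.2.toNNReal) :
    (∫ ω, X ω ∂P = ∫ ω, M 0 ω ∂P) ∧
    variance X P = (∫ ω, S2 0 ω ∂P) + (1 - α) / (1 + α) * variance (M 0) P := by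
  subst hμinf hσinf
  have hc := hasSum_one_sub_mul_pow hα0.le hα1
  have hd : HasSum (fun j : ℕ => (1 - α ^ 2) * α ^ (2 * j)) 1 := by
    simpa only [pow_mul] using hasSum_one_sub_mul_pow (sq_nonneg α) (by nlinarith)
  have hM n : AEMeasurable (M n) P := (measurable_fst.comp (hmeas n)).aemeasurable
  have hS n : AEMeasurable (S2 n) P := (measurable_snd.comp (hmeas n)).aemeasurable
  have hMbd n : ∀ᵐ ω ∂P, ‖M n ω‖ ≤ Cb := (hbd n).mono fun _ h => h.1
  have hSbd n : ∀ᵐ ω ∂P, ‖S2 n ω‖ ≤ Cb := (hbd n).mono fun _ h => h.2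
  have hlaw n : IdentDistrib (fun ω => (M n ω, S2 n ω)) (fun ω => (M 0 ω, S2 0 ω)) P P :=
    ⟨(hmeas n).aemeasurable, (hmeas 0).aemeasurable, hident n⟩
  have hMlaw n : IdentDistrib (M n) (M 0) P P := (hlaw n).comp measurable_fst
  have hSlaw n : IdentDistrib (S2 n) (S2 0) P P := (hlaw n).comp measurable_snd
  have hMindep : Pairwise fun i j => IndepFun (M i) (M j) P := fun i j hij =>
    (hindep.indepFun hij).comp measurable_fst measurable_fst
  have hσ0 : ∀ᵐ ω ∂P, 0 ≤ ∑' j, (1 - α ^ 2) * α ^ (2 * j) * S2 j ω := by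
    filter_upwards [ae_all_iff.2 hS2nonneg] with ω hω
    exact tsum_nonneg fun j => mul_nonneg (mul_nonneg (by nlinarith) (by positivity)) (hω j)
  have hμ2 := memLp_tsum_mul hc.summable hM hMbd 2
  have hσ1 := (memLp_tsum_mul hd.summable hS hSbd 1).integrable le_rfl
  have hX2 := memLp_two_of_condDistrib_eq_gaussianReal hXmeas.aemeasurable hμ2 hσ1 hcond
  constructor
  · rw [integral_eq_of_condDistrib_eq_gaussianReal hXmeas.aemeasurable
      hμ2.aestronglyMeasurable.aemeasurable hσ1.aemeasurable (hX2.integrable one_le_two) hcond,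
      integral_tsum_mul_of_integral_eq hc hM hMbd fun n => (hMlaw n).integral_eq, one_mul]
  · rw [variance_eq_of_condDistrib_eq_gaussianReal hXmeas.aemeasurable hμ2 hσ1 hσ0 hcond,
      integral_tsum_mul_of_integral_eq hd hS hSbd fun n => (hSlaw n).integral_eq,
      variance_tsum_mul_of_variance_eq hc.summable (hasSum_sq_one_sub_mul_pow hα0.le hα1) hM hMbd
        hMindep fun n => (hMlaw n).variance_eq, one_mul]
end
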